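/- Let M be an R-module (R = ℤ[t]/(t²−1)) fitting in a split short exact sequence of R-modules 0 → J^a → M → I^b → 0, where I = (t−1) and J = (t+1). Then M is free of rank a + b as a ℤ-module, and for every prime 𝐩 ⊇ J of R with 𝐩 ≠ (J, 2), M_𝐩 ≅ (I_𝐩)^b as R_𝐩-modules. -/

import Mathlib

/-!
Evaluation at `t = -1` identifies `I = (t - 1)` with `ℤ` (multiplication by `t - 1` on `R` factors
through it), and evaluation at `t = 1` does the same for `J`; hence `M ≅ J^a ⊕ I^b ≅ ℤ^(a+b)`.
Since `(t - 1)(t + 1) = 0`, the element `t - 1` kills `J`. A prime `𝐩 ⊇ J` containing `t - 1`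
also contains `2`, so it is the maximal ideal `(t + 1, 2)`; otherwise `t - 1` becomes a unit in
`R_𝐩`, `J_𝐩 = 0` and `M_𝐩 ≅ (I_𝐩)^b`.
-/

open Polynomial

abbrev R : Type := ℤ[X] ⧸ Ideal.span ({X ^ 2 - 1} : Set ℤ[X])

noncomputable def t : R := Ideal.Quotient.mk _ X

noncomputable abbrev I : Ideal R := Ideal.span {t - 1}
noncomputable abbrev J : Ideal R := Ideal.span {t + 1}

namespace Polynomial

variable {A : Type*} [CommRing A]

/-- For `p = (X - d)(X - c)`, multiplication by `X - c` on `A[X]/(p)` factors through evaluation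
at `d`, and its kernel is `(X - d)` since `X - c` is monic. -/
theorem nonempty_span_mk_X_sub_C_equiv (c d : A) {p : A[X]} (hp : (X - C d) * (X - C c) = p) :
    Nonempty (Ideal.span {Ideal.Quotient.mk (Ideal.span {p}) (X - C c)} ≃ₗ[A] A) := by
  set u := Ideal.Quotient.mk (Ideal.span {p}) (X - C c)
  let φ := LinearMap.toSpanSingleton A (Ideal.span {u}) ⟨u, Ideal.mem_span_singleton_self u⟩
  have hφ (a : A) : (φ a : A[X] ⧸ Ideal.span {p}) = Ideal.Quotient.mk _ (C a * (X - C c)) := by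
    change a • u = _
    rw [(Algebra.smul_def a u :), ← Ideal.Quotient.mk_algebraMap, algebraMap_eq, map_mul]
  have hinj : Function.Injective φ := by
    rw [← LinearMap.ker_eq_bot, LinearMap.ker_eq_bot']
    intro a ha
    have hmem : C a * (X - C c) ∈ Ideal.span {p} := by
      rw [← Ideal.Quotient.eq_zero_iff_mem, ← hφ, ha, ZeroMemClass.coe_zero]
    obtain ⟨g, hg⟩ := Ideal.mem_span_singleton'.1 hmem
    have hCa : C a = g * (X - C d) := by
      refine (monic_X_sub_C c).isRegular.right ?_
      simp only [← hg, ← hp]; ring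
    simpa using congrArg (eval d) hCa
  have hsurj : Function.Surjective φ := by
    rintro ⟨x, hx⟩
    obtain ⟨r, rfl⟩ := Ideal.mem_span_singleton'.1 hx
    obtain ⟨f, rfl⟩ := Ideal.Quotient.mk_surjective r
    refine ⟨f.eval d, Subtype.ext ?_⟩
    obtain ⟨g, hg⟩ : X - C d ∣ f - C (f.eval d) := X_sub_C_dvd_sub_C_eval
    have hmem : (f - C (f.eval d)) * (X - C c) ∈ Ideal.span {p} :=
      Ideal.mem_span_singleton'.2 ⟨g, by rw [hg, ← hp]; ring⟩
    change _ = Ideal.Quotient.mk _ f * Ideal.Quotient.mk _ (X - C c)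
    rw [hφ, ← map_mul, eq_comm, ← sub_eq_zero, ← map_sub, ← sub_mul]
    exact Ideal.Quotient.eq_zero_iff_mem.2 hmem
  exact ⟨(LinearEquiv.ofBijective φ ⟨hinj, hsurj⟩).symm⟩

end Polynomial

theorem LocalizedModule.nonempty_equiv_pi_of_equiv_prod {A : Type*} [CommRing A]
    (S : Submonoid A) {M N P ι : Type*} [AddCommMonoid M] [Module A M] [AddCommMonoid N]
    [Module A N] [AddCommMonoid P] [Module A P] [Finite ι]
    (e : M ≃ₗ[A] N × (ι → P)) (hN : ∀ n : N, ∃ s ∈ S, s • n = 0) :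
    Nonempty (LocalizedModule S M ≃ₗ[Localization S] (ι → LocalizedModule S P)) := by
  have : Unique (LocalizedModule S N) :=
    @uniqueOfSubsingleton _ (LocalizedModule.subsingleton_iff.2 hN) 0
  let f := ((LocalizedModule.mkLinearMap S N).prodMap
    (LinearMap.pi fun i => LocalizedModule.mkLinearMap S P ∘ₗ LinearMap.proj i)) ∘ₗ e.toLinearMap
  exact ⟨((IsLocalizedModule.iso S f).trans LinearEquiv.uniqueProd).extendScalarsOfIsLocalization
    S (Localization S)⟩

theorem mk_X_sub_C_one : Ideal.Quotient.mk _ (X - C 1) = t - 1 := by simp [t]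

theorem mk_X_sub_C_neg_one : Ideal.Quotient.mk _ (X - C (-1)) = t + 1 := by simp [t]

theorem X_sub_C_one_mul_X_sub_C_neg_one : (X - C 1 : ℤ[X]) * (X - C (-1)) = X ^ 2 - 1 := by
  simp only [map_neg, map_one]; ring

theorem nonempty_I_equiv_int : Nonempty (I ≃ₗ[ℤ] ℤ) := by
  rw [I, ← mk_X_sub_C_one]
  exact nonempty_span_mk_X_sub_C_equiv 1 (-1)
    ((mul_comm _ _).trans X_sub_C_one_mul_X_sub_C_neg_one)

theorem nonempty_J_equiv_int : Nonempty (J ≃ₗ[ℤ] ℤ) := by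
  rw [J, ← mk_X_sub_C_neg_one]
  exact nonempty_span_mk_X_sub_C_equiv (-1) 1 X_sub_C_one_mul_X_sub_C_neg_one

theorem t_sub_one_mul_t_add_one : (t - 1) * (t + 1) = 0 := by
  rw [← mk_X_sub_C_one, ← mk_X_sub_C_neg_one, ← map_mul, X_sub_C_one_mul_X_sub_C_neg_one]
  exact Ideal.Quotient.eq_zero_iff_mem.2 (Ideal.mem_span_singleton_self _)

theorem mem_or_sub_one_mem_span_t_add_one_two (r : R) :
    r ∈ Ideal.span {t + 1, 2} ∨ r - 1 ∈ Ideal.span {t + 1, 2} := by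
  set K : Ideal R := Ideal.span {t + 1, 2}
  have htK : t + 1 ∈ K := Ideal.subset_span (Set.mem_insert _ _)
  have h2K : (2 : R) ∈ K := Ideal.subset_span (Set.mem_insert_of_mem _ rfl)
  obtain ⟨f, rfl⟩ := Ideal.Quotient.mk_surjective r
  obtain ⟨g, hg⟩ : X - C (-1) ∣ f - C (f.eval (-1)) := X_sub_C_dvd_sub_C_eval
  have hfK : Ideal.Quotient.mk _ f - ((f.eval (-1) : ℤ) : R) ∈ K := by
    have := congrArg (Ideal.Quotient.mk (Ideal.span ({X ^ 2 - 1} : Set ℤ[X]))) hg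
    rw [map_mul, mk_X_sub_C_neg_one, map_sub, eq_intCast, map_intCast] at this
    rw [this]
    exact K.mul_mem_right _ htK
  rcases Int.even_or_odd' (f.eval (-1)) with ⟨m, hm | hm⟩
  · left
    simpa [hm, mul_comm] using K.add_mem hfK (K.mul_mem_left (m : R) h2K)
  · right
    convert K.add_mem hfK (K.mul_mem_left (m : R) h2K) using 1
    rw [hm]; push_cast; ring

theorem eq_span_t_add_one_two_of_le {p : Ideal R} (hp : p ≠ ⊤)
    (h : Ideal.span {t + 1, 2} ≤ p) : p = Ideal.span {t + 1, 2} := by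
  refine le_antisymm (fun r hr => ?_) h
  refine (mem_or_sub_one_mem_span_t_add_one_two r).resolve_right fun h1 => hp ?_
  rw [Ideal.eq_top_iff_one, ← sub_sub_cancel r 1]
  exact p.sub_mem hr (h h1)

theorem t_sub_one_notMem {p : Ideal R} [p.IsPrime] (hJ : J ≤ p)
    (hne : p ≠ Ideal.span {t + 1, 2}) : t - 1 ∉ p := by
  intro h
  have ht : t + 1 ∈ p := hJ (Ideal.mem_span_singleton_self _)
  have h2 : (2 : R) ∈ p := by convert p.sub_mem ht h using 1; ring
  refine hne (eq_span_t_add_one_two_of_le Ideal.IsPrime.ne_top' ?_)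
  rw [Ideal.span_le, Set.insert_subset_iff, Set.singleton_subset_iff]
  exact ⟨ht, h2⟩

theorem t_sub_one_smul_J_eq_zero (x : J) : (t - 1) • x = 0 := by
  obtain ⟨r, hr⟩ := Ideal.mem_span_singleton'.1 x.2
  ext
  rw [Submodule.coe_smul, smul_eq_mul, ← hr, Submodule.coe_zero]
  linear_combination r * t_sub_one_mul_t_add_one

/-- If M is an R-module fitting in a split short exact sequence
0 → J^a → M → I^b → 0 (so M ≅ J^a ⊕ I^b as R-modules), then M is a free
ℤ-module of rank a + b, and for every prime 𝐩 ⊇ J with 𝐩 ≠ (J, 2) one has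
M_𝐩 ≅ (I_𝐩)^b as R_𝐩-modules. -/
theorem split_extension_structure (a b : ℕ) (M : Type) [AddCommGroup M] [Module R M]
    (e : M ≃ₗ[R] ((Fin a → J) × (Fin b → I))) :
    Nonempty (M ≃ₗ[ℤ] (Fin (a + b) → ℤ)) ∧
    ∀ (p : Ideal R) [p.IsPrime], J ≤ p → p ≠ Ideal.span {t + 1, 2} →
      Nonempty ((LocalizedModule p.primeCompl M) ≃ₗ[Localization p.primeCompl]
        (Fin b → LocalizedModule p.primeCompl I)) := by
  refine ⟨?_, fun p _ hJ hne => ?_⟩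
  · obtain ⟨eI⟩ := nonempty_I_equiv_int
    obtain ⟨eJ⟩ := nonempty_J_equiv_int
    exact ⟨e.toAddEquiv.toIntLinearEquiv ≪≫ₗ
      (LinearEquiv.piCongrRight fun _ => eJ).prodCongr (LinearEquiv.piCongrRight fun _ => eI) ≪≫ₗ
      (LinearEquiv.sumArrowLequivProdArrow (Fin a) (Fin b) ℤ ℤ).symm ≪≫ₗ
      (LinearEquiv.funCongrLeft ℤ ℤ finSumFinEquiv).symm⟩
  · exact LocalizedModule.nonempty_equiv_pi_of_equiv_prod p.primeCompl e
      fun x => ⟨t - 1, t_sub_one_notMem hJ hne, funext fun i => t_sub_one_smul_J_eq_zero (x i)⟩
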